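/- arXiv:1601.04219 — 2 statements merged into one kernel-verified Lean document; each statement's English description precedes it below -/
import Mathlib

section
/- Consider the relaxed problem P2 with objective (numerator)/(P_0 + ∑_j y_j P_j) where numerator is nonnegative and all P_j > 0, constraints x_{k,j} ≤ y_j and 0 ≤ x, y ≤ 1. If an optimal solution (x*, y*) has x* binary (all entries in {0,1}), then replacing y* by ŷ with ŷ_j = max_k x*_{k,j} yields a feasible solution with objective value at least as large; moreover ŷ is binary. Hence there exists an optimal solution to P2 with both x and y binary. -/
/-- Feasibility for the relaxed problem P2: index `0` of `Fin (J+1)` is the MBS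
(always on), indices `j.succ` are the SBS's with ON-variables `y j`. -/
def P2Feasible (K J : ℕ) (S : Fin (J + 1) → ℝ)
    (x : Fin K → Fin (J + 1) → ℝ) (y : Fin J → ℝ) : Prop :=
  (∀ k j, 0 ≤ x k j ∧ x k j ≤ 1) ∧ (∀ j, 0 ≤ y j ∧ y j ≤ 1) ∧
  (∀ k, ∑ j, x k j ≤ 1) ∧ (∀ j, ∑ k, x k j ≤ S j) ∧
  (∀ k (j : Fin J), x k j.succ ≤ y j)

/-- Energy-efficiency objective of P2. -/
noncomputable def P2Obj (K J : ℕ) (C : Fin K → Fin (J + 1) → ℝ)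
    (P : Fin (J + 1) → ℝ) (x : Fin K → Fin (J + 1) → ℝ) (y : Fin J → ℝ) : ℝ :=
  (∑ k, ∑ j, x k j * C k j) / (P 0 + ∑ j, y j * P j.succ)

/-- If an optimal solution `(x*, y*)` of the relaxed problem P2 has binary `x*`,
then setting `ŷ_j = max_k x*_{k,j}` (i.e. `ŷ_j = 1` iff some `x*_{k,j} = 1`)
gives a feasible solution with objective at least as large, with binary `ŷ`;
hence P2 has an optimal solution with both `x` and `y` binary. -/
theorem stmt11 (K J : ℕ) (C : Fin K → Fin (J + 1) → ℝ)
    (hC : ∀ k j, 0 ≤ C k j) (P : Fin (J + 1) → ℝ) (hP : ∀ j, 0 < P j)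
    (S : Fin (J + 1) → ℝ)
    (xs : Fin K → Fin (J + 1) → ℝ) (ys : Fin J → ℝ)
    (hfeas : P2Feasible K J S xs ys)
    (hopt : ∀ x y, P2Feasible K J S x y →
      P2Obj K J C P x y ≤ P2Obj K J C P xs ys)
    (hbin : ∀ k j, xs k j = 0 ∨ xs k j = 1)
    (yhat : Fin J → ℝ)
    (hyhat : ∀ j, ((∃ k, xs k j.succ = 1) → yhat j = 1) ∧
      ((∀ k, xs k j.succ ≠ 1) → yhat j = 0)) :
    P2Feasible K J S xs yhat ∧
    P2Obj K J C P xs ys ≤ P2Obj K J C P xs yhat ∧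
    (∀ j, yhat j = 0 ∨ yhat j = 1) ∧
    (∃ x y, P2Feasible K J S x y ∧
      (∀ x' y', P2Feasible K J S x' y' → P2Obj K J C P x' y' ≤ P2Obj K J C P x y) ∧
      (∀ k j, x k j = 0 ∨ x k j = 1) ∧ (∀ j, y j = 0 ∨ y j = 1)) := by
  obtain ⟨hx01, hy01, hrow, hcol, hxy⟩ := hfeas
  -- yhat binary
  have hyb : ∀ j, yhat j = 0 ∨ yhat j = 1 := by
    intro j
    by_cases h : ∃ k, xs k j.succ = 1
    · exact Or.inr ((hyhat j).1 h)
    · exact Or.inl ((hyhat j).2 (fun k hk => h ⟨k, hk⟩))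
  -- x ≤ yhat
  have hxyhat : ∀ k (j : Fin J), xs k j.succ ≤ yhat j := by
    intro k j
    rcases hbin k j.succ with h | h
    · rw [h]
      rcases hyb j with h0 | h1
      · rw [h0]
      · rw [h1]; norm_num
    · rw [h, (hyhat j).1 ⟨k, h⟩]
  have hfeas' : P2Feasible K J S xs yhat := by
    refine ⟨hx01, ?_, hrow, hcol, hxyhat⟩
    intro j
    rcases hyb j with h | h <;> rw [h] <;> norm_num
  -- yhat ≤ ys
  have hyle : ∀ j, yhat j ≤ ys j := by
    intro j
    rcases hyb j with h | h
    · rw [h]; exact (hy01 j).1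
    · rw [h]
      by_cases he : ∃ k, xs k j.succ = 1
      · obtain ⟨k, hk⟩ := he
        calc (1:ℝ) = xs k j.succ := hk.symm
        _ ≤ ys j := hxy k j
      · simp [(hyhat j).2 (fun k hk => he ⟨k, hk⟩)] at h
  -- denominators
  have hden : ∀ (y : Fin J → ℝ), (∀ j, 0 ≤ y j) → 0 < P 0 + ∑ j, y j * P j.succ := by
    intro y hy
    have : 0 ≤ ∑ j, y j * P j.succ :=
      Finset.sum_nonneg fun j _ => mul_nonneg (hy j) (hP j.succ).le
    linarith [hP 0]
  have hd1 : 0 < P 0 + ∑ j, yhat j * P j.succ :=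
    hden yhat (fun j => (hfeas'.2.1 j).1)
  have hd2 : 0 < P 0 + ∑ j, ys j * P j.succ := hden ys (fun j => (hy01 j).1)
  have hdle : P 0 + ∑ j, yhat j * P j.succ ≤ P 0 + ∑ j, ys j * P j.succ := by
    have : ∑ j, yhat j * P j.succ ≤ ∑ j, ys j * P j.succ :=
      Finset.sum_le_sum fun j _ => mul_le_mul_of_nonneg_right (hyle j) (hP j.succ).le
    linarith
  have hnum : 0 ≤ ∑ k, ∑ j, xs k j * C k j :=
    Finset.sum_nonneg fun k _ => Finset.sum_nonneg fun j _ =>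
      mul_nonneg (hx01 k j).1 (hC k j)
  have hobj : P2Obj K J C P xs ys ≤ P2Obj K J C P xs yhat :=
    div_le_div_of_nonneg_left hnum hd1 hdle |>.trans_eq rfl |>.trans_eq rfl
  exact ⟨hfeas', hobj, hyb,
    xs, yhat, hfeas', fun x' y' h => (hopt x' y' h).trans hobj, hbin, hyb⟩
end

section
/- In the converged deferred-acceptance matching, each matched user is assigned to its most preferred achievable BS: if user k ever bids for BS j during the game, then no BS that k strictly prefers to j would ever accept k (given the final assignment), i.e., user k cannot be matched to any BS better than j in any stable continuation. -/
/-- A stable many-to-one matching: capacities respected, each user matched to at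
most one BS, and no blocking pair. (Lower `userPref`/`bsPref` value means more
preferred.) -/
def StableMatching (K J : ℕ) (S : Fin (J + 1) → ℕ)
    (userPref : Fin K → Fin (J + 1) → ℕ) (bsPref : Fin (J + 1) → Fin K → ℕ)
    (M : Fin (J + 1) → Set (Fin K)) : Prop :=
  (∀ j, (M j).ncard ≤ S j) ∧ (∀ k j j', k ∈ M j → k ∈ M j' → j = j') ∧
  ¬ ∃ (k : Fin K) (j : Fin (J + 1)),
      (∀ j', k ∈ M j' → userPref k j < userPref k j') ∧
      ((M j).ncard < S j ∨ ∃ k' ∈ M j, bsPref j k < bsPref j k')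

/-- User-optimality of the user-proposing deferred-acceptance bidding game:
given a trace of the game (bids `Bid`, waiting lists `W`, rejection sets `Rej`
evolving by deferred-acceptance dynamics), if user `k` ever bids for BS `j`,
then in no stable matching is `k` matched to a BS it strictly prefers to `j`. -/
theorem stmt16 (K J : ℕ) (S : Fin (J + 1) → ℕ)
    (userPref : Fin K → Fin (J + 1) → ℕ) (bsPref : Fin (J + 1) → Fin K → ℕ)
    (huinj : ∀ k, Function.Injective (userPref k))
    (hbinj : ∀ j, Function.Injective (bsPref j))
    (Bid : ℕ → Fin K → Option (Fin (J + 1)))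
    (W : ℕ → Fin (J + 1) → Set (Fin K))
    (Rej : ℕ → Fin K → Set (Fin (J + 1)))
    (hW0 : ∀ j, W 0 j = ∅) (hR0 : ∀ k, Rej 0 k = ∅)
    (hbid : ∀ t k j, Bid t k = some j ↔
      ((∀ j', k ∉ W t j') ∧ j ∉ Rej t k ∧
        ∀ j', j' ∉ Rej t k → userPref k j ≤ userPref k j'))
    (hkeep : ∀ t j, W (t + 1) j ⊆ W t j ∪ {k | Bid t k = some j} ∧
      (W (t + 1) j).ncard = min (S j) ((W t j ∪ {k | Bid t k = some j}).ncard) ∧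
      ∀ k ∈ W (t + 1) j, ∀ k' ∈ (W t j ∪ {k | Bid t k = some j}) \ W (t + 1) j,
        bsPref j k < bsPref j k')
    (hRej : ∀ t k, Rej (t + 1) k =
      Rej t k ∪ {j | Bid t k = some j ∧ k ∉ W (t + 1) j}) :
    ∀ t k j, Bid t k = some j →
      ∀ M : Fin (J + 1) → Set (Fin K),
        StableMatching K J S userPref bsPref M →
        ∀ j', userPref k j' < userPref k j → k ∉ M j' := by
  -- rejection sets are monotone in time
  have rej_mono : ∀ s t, s ≤ t → ∀ k, Rej s k ⊆ Rej t k := by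
    intro s t
    induction t with
    | zero =>
      intro h k
      have : s = 0 := Nat.le_zero.mp h
      subst this; exact subset_rfl
    | succ t ih =>
      intro h k
      rcases Nat.eq_or_lt_of_le h with rfl | hlt
      · exact subset_rfl
      · rw [hRej t k]
        exact (ih (Nat.lt_succ_iff.mp hlt) k).trans Set.subset_union_left
  -- anyone in a waiting list has bid for that BS at some earlier time
  have bid_of_W : ∀ t k j, k ∈ W t j → ∃ s, s < t ∧ Bid s k = some j := by
    intro t
    induction t with
    | zero => intro k j h; rw [hW0] at h; exact absurd h (Set.notMem_empty k)
    | succ t ih =>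
      intro k j h
      rcases (hkeep t j).1 h with h | h
      · obtain ⟨s, hs, hb⟩ := ih k j h
        exact ⟨s, hs.trans (Nat.lt_succ_self t), hb⟩
      · exact ⟨t, Nat.lt_succ_self t, h⟩
  -- main lemma: a user rejected by a BS can never be stably matched to it
  have unach : ∀ t (M : Fin (J + 1) → Set (Fin K)),
      StableMatching K J S userPref bsPref M →
      ∀ k j, j ∈ Rej t k → k ∉ M j := by
    intro t
    induction t with
    | zero => intro M hM k j hj; rw [hR0] at hj; exact absurd hj (Set.notMem_empty j)
    | succ t ih =>
      intro M hM k j hjr hkM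
      rw [hRej] at hjr
      rcases hjr with h | ⟨hb, hkW⟩
      · exact ih M hM k j h hkM
      obtain ⟨hsub, hcard, hpref⟩ := hkeep t j
      -- every user kept on the waiting list must be matched to j in M
      have hA : ∀ k' ∈ W (t + 1) j, k' ∈ M j := by
        intro k' hk'
        by_contra hk'M
        apply hM.2.2
        refine ⟨k', j, ?_, Or.inr ⟨k, hkM, hpref k' hk' k ⟨Or.inr hb, hkW⟩⟩⟩
        intro j'' hj''
        have hne : j'' ≠ j := fun h => hk'M (h ▸ hj'')
        obtain ⟨s, hs, hbs⟩ := bid_of_W (t + 1) k' j hk'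
        have hopt := ((hbid s k' j).mp hbs).2.2
        by_contra hlt
        push_neg at hlt
        have hne2 : userPref k' j'' ≠ userPref k' j := fun h => hne (huinj k' h)
        have hj''r : j'' ∈ Rej s k' := by
          by_contra hnr
          have := hopt j'' hnr
          omega
        have hj''t : j'' ∈ Rej t k' :=
          rej_mono s t (Nat.lt_succ_iff.mp hs) k' hj''r
        exact ih M hM k' j'' hj''t hj''
      -- cardinality contradiction
      have hfin : (W t j ∪ {k' | Bid t k' = some j}).Finite := Set.toFinite _
      have hkpool : k ∈ W t j ∪ {k' | Bid t k' = some j} := Or.inr hb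
      have hss : W (t + 1) j ⊂ (W t j ∪ {k' | Bid t k' = some j}) :=
        ⟨hsub, fun h => hkW (h hkpool)⟩
      have hlt : (W (t + 1) j).ncard < (W t j ∪ {k' | Bid t k' = some j}).ncard :=
        Set.ncard_lt_ncard hss hfin
      have hWcard : (W (t + 1) j).ncard = S j := by omega
      have hins : insert k (W (t + 1) j) ⊆ M j := by
        intro x hx
        rcases Set.mem_insert_iff.mp hx with rfl | hx
        · exact hkM
        · exact hA x hx
      have hle : (insert k (W (t + 1) j)).ncard ≤ S j :=
        le_trans (Set.ncard_le_ncard hins (Set.toFinite _)) (hM.1 j)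
      rw [Set.ncard_insert_of_notMem hkW (Set.toFinite _)] at hle
      omega
  intro t k j hb M hM j' hlt hkM
  have h := (hbid t k j).mp hb
  have hj'r : j' ∈ Rej t k := by
    by_contra hnr
    have := h.2.2 j' hnr
    omega
  exact unach t M hM k j' hj'r hkM
end
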